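/- Let B be a Boolean formula in CNF with variables v_1,…,v_n and clauses c_1,…,c_m, where every clause has exactly three literals and every variable occurs exactly twice unnegated and exactly twice negated in B. Let α ≥ 1 be an integer and D = 6n(α−1)+1. Construct the CACR instance I with lexicographic preferences as follows: courses X ∪ Y ∪ Z with X = {x_i^1, x_i^2, x̄_i^1, x̄_i^2 : 1 ≤ i ≤ n}, Y = {y_i^1, y_i^2 : 1 ≤ i ≤ n}, Z = {z_1,…,z_D}, each of capacity 1; corequisites: y_i^1 ↔ y_i^2 for each i, and all courses of Z are mutually corequisite, all other courses forming singleton classes; applicants A ∪ G ∪ {h, b} with A = {a_j : 1 ≤ j ≤ m}, each of capacity 1, G = {g_i^1, g_i^2 : 1 ≤ i ≤ n}, each of capacity 2, h of capacity 2n − m, and b of capacity D; for 1 ≤ j ≤ m and 1 ≤ s ≤ 3 let x(c_j^s) denote the X-course corresponding to the literal occurrence at position s of clause c_j; preference lists P(a_j): x(c_j^1), x(c_j^2), x(c_j^3); P(g_i^1): y_i^1, y_i^2, x_i^1, x_i^2; P(g_i^2): y_i^1, y_i^2, x̄_i^1, x̄_i^2; P(h): all courses of X in some fixed order; P(b): all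 courses of X in some fixed order followed by all courses of Z in some fixed order. Then: (a) if B is satisfiable, then I admits a Pareto optimal matching of cardinality D + 6n; and (b) if B is not satisfiable, then every Pareto optimal matching of I has cardinality at most 6n. -/

import Mathlib

open Finset

def bundle {A C : Type*} [DecidableEq A] [DecidableEq C]
    (M : Finset (A × C)) (a : A) : Finset C :=
  (M.filter fun p => p.1 = a).image Prod.snd

def slots {A C : Type*} [DecidableEq C] (M : Finset (A × C)) (c : C) : ℕ :=
  (M.filter fun p => p.2 = c).card

/-- Lexicographic comparison of bundles w.r.t. a preference list (earlier = better). -/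
def lexPrefers {C : Type*} [DecidableEq C] (l : List C) (S₁ S₂ : Finset C) : Prop :=
  ∃ c ∈ S₁ \ S₂, ∀ d ∈ (S₁ \ S₂) ∪ (S₂ \ S₁), l.idxOf c ≤ l.idxOf d

def IsFeasibleCR {A C : Type*} (pref : A → List C) (qA : A → ℕ)
    (coreq : C → C → Prop) (a : A) (S : Finset C) : Prop :=
  (∀ c ∈ S, c ∈ pref a) ∧ S.card ≤ qA a ∧
    ∀ c ∈ S, ∀ c', coreq c c' → c' ∈ S

def IsMatchingCR {A C : Type*} [DecidableEq A] [DecidableEq C]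
    (pref : A → List C) (qA : A → ℕ) (qC : C → ℕ)
    (coreq : C → C → Prop) (M : Finset (A × C)) : Prop :=
  (∀ a, IsFeasibleCR pref qA coreq a (bundle M a)) ∧ ∀ c, slots M c ≤ qC c

def DominatesCR {A C : Type*} [DecidableEq A] [DecidableEq C]
    (pref : A → List C) (M' M : Finset (A × C)) : Prop :=
  (∃ a, lexPrefers (pref a) (bundle M' a) (bundle M a)) ∧
    ∀ a, ¬ lexPrefers (pref a) (bundle M a) (bundle M' a)

def ParetoOptimalCR {A C : Type*} [DecidableEq A] [DecidableEq C]
    (pref : A → List C) (qA : A → ℕ) (qC : C → ℕ)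
    (coreq : C → C → Prop) (M : Finset (A × C)) : Prop :=
  IsMatchingCR pref qA qC coreq M ∧
    ∀ M', IsMatchingCR pref qA qC coreq M' → ¬ DominatesCR pref M' M

/-- The `X`-courses: `(i, true, r)` is `x_i^{r+1}`, `(i, false, r)` is `x̄_i^{r+1}`. -/
abbrev XCourse (n : ℕ) := Fin n × Bool × Fin 2

/-- The courses of the instance: `X ∪ Y ∪ Z` (the `Y`-course `(i, r)` is `y_i^{r+1}`
and the `Z`-courses are `z_1, …, z_D`). -/
abbrev CourseZ (n D : ℕ) := XCourse n ⊕ ((Fin n × Fin 2) ⊕ Fin D)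

/-- The applicants: `a_j`, the `g_i^1 = Sum.inl (Sum.inr (i, true))`,
`g_i^2 = Sum.inl (Sum.inr (i, false))`, `h = Sum.inr false` and `b = Sum.inr true`. -/
abbrev ApplZ (m n : ℕ) := (Fin m ⊕ (Fin n × Bool)) ⊕ Bool

/-- The corequisite class of a course: `y_i^1 ↔ y_i^2` for each `i`, all courses of
`Z` mutually corequisite, and the `X`-courses in singleton classes. -/
def classOf {n D : ℕ} : CourseZ n D → XCourse n ⊕ (Fin n ⊕ Unit)
  | Sum.inl x => Sum.inl x
  | Sum.inr (Sum.inl y) => Sum.inr (Sum.inl y.1)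
  | Sum.inr (Sum.inr _) => Sum.inr (Sum.inr ())

/-- The corequisite equivalence relation of the instance. -/
def coreqZ {n D : ℕ} (c c' : CourseZ n D) : Prop := classOf c = classOf c'

/-- The `X`-course `x(c_j^s)` corresponding to the literal occurrence at position
`s` of clause `c_j`. -/
def xcZ {m n D : ℕ} (lit : Fin m → Fin 3 → Fin n × Bool)
    (occ : Fin m → Fin 3 → Fin 2) (j : Fin m) (s : Fin 3) : CourseZ n D :=
  Sum.inl ((lit j s).1, (lit j s).2, occ j s)

/-- The preference lists: `P(a_j) : x(c_j^1), x(c_j^2), x(c_j^3)`;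
`P(g_i^1) : y_i^1, y_i^2, x_i^1, x_i^2`; `P(g_i^2) : y_i^1, y_i^2, x̄_i^1, x̄_i^2`;
`P(h) : [X]` (in the fixed order `lX`); `P(b) : [X], [Z]` (in the fixed orders
`lX'` and `lZ`). -/
def prefZ {m n D : ℕ} (lit : Fin m → Fin 3 → Fin n × Bool)
    (occ : Fin m → Fin 3 → Fin 2)
    (lX lX' : List (XCourse n)) (lZ : List (Fin D)) :
    ApplZ m n → List (CourseZ n D)
  | Sum.inl (Sum.inl j) => [xcZ lit occ j 0, xcZ lit occ j 1, xcZ lit occ j 2]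
  | Sum.inl (Sum.inr (i, b)) =>
      [Sum.inr (Sum.inl (i, 0)), Sum.inr (Sum.inl (i, 1)),
        Sum.inl (i, b, 0), Sum.inl (i, b, 1)]
  | Sum.inr false => lX.map Sum.inl
  | Sum.inr true => lX'.map Sum.inl ++ lZ.map (fun z => Sum.inr (Sum.inr z))

/-- The capacities of the applicants: `q(a_j) = 1`, `q(g_i^r) = 2`,
`q(h) = 2n − m`, `q(b) = D`. -/
def qAZ (m n D : ℕ) : ApplZ m n → ℕ
  | Sum.inl (Sum.inl _) => 1
  | Sum.inl (Sum.inr _) => 2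
  | Sum.inr false => 2 * n - m
  | Sum.inr true => D

/-!
(a) Given a satisfying assignment `f`, let `g_i^{f i}` take `y_i^1, y_i^2`, the other `g_i` take
its two `X`-courses (occurrences of a false literal), each `a_j` the first true literal
occurrence of its clause, `h` the remaining `2n − m` true occurrences and `b` all of `Z`. Every
course is used, and the matching is the outcome of a serial dictatorship (the `g`s on the true
side, the other `g`s, the `a`s, `h`, `b`), so it is Pareto optimal.

(b) A matching with more than `6n` pairs uses a `Z`-course, so `b` holds exactly `Z`. Pareto
optimality then forces every `X`- and `Y`-course to be used (else `b`, resp. some `g_i^1`, could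
improve on its own), so all `6n + D` course slots are filled; as the applicant capacities also
sum to `6n + D`, every applicant is full. Hence each `g_i` holds its `Y`-pair or its `X`-pair,
and "`v_i` is true iff `g_i^1` holds `y_i^1`" satisfies every clause: the course held by `a_j`
is not held by its `g`, which therefore holds the `Y`-pair.
-/

section Matching

variable {A C : Type*} [DecidableEq C]

theorem card_eq_sum_slots [Fintype C] (M : Finset (A × C)) : M.card = ∑ c, slots M c :=
  card_eq_sum_card_fiberwise fun p _ => mem_univ p.2

theorem slots_le_one_iff {M : Finset (A × C)} {c : C} :
    slots M c ≤ 1 ↔ ∀ a a', (a, c) ∈ M → (a', c) ∈ M → a = a' := by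
  refine card_le_one.trans ⟨fun h a a' ha ha' => ?_, ?_⟩
  · exact congrArg Prod.fst (h _ (mem_filter.2 ⟨ha, rfl⟩) _ (mem_filter.2 ⟨ha', rfl⟩))
  · rintro h ⟨a, c₁⟩ hp ⟨a', c₂⟩ hq
    simp only [mem_filter] at hp hq
    obtain ⟨hp, rfl⟩ := hp
    obtain ⟨hq, rfl⟩ := hq
    rw [h a a' hp hq]

theorem one_le_slots_iff {M : Finset (A × C)} {c : C} : 1 ≤ slots M c ↔ ∃ a, (a, c) ∈ M := by
  simp [slots, Nat.one_le_iff_ne_zero, filter_eq_empty_iff]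

variable [DecidableEq A]

theorem mem_bundle {M : Finset (A × C)} {a : A} {c : C} : c ∈ bundle M a ↔ (a, c) ∈ M := by
  simp [bundle]

theorem card_bundle (M : Finset (A × C)) (a : A) :
    (bundle M a).card = (M.filter fun p => p.1 = a).card :=
  card_image_of_injOn fun _ hp _ hq h =>
    Prod.ext ((mem_filter.1 hp).2.trans (mem_filter.1 hq).2.symm) h

theorem card_eq_sum_card_bundle [Fintype A] (M : Finset (A × C)) :
    M.card = ∑ a, (bundle M a).card := by
  simp only [card_bundle]
  exact card_eq_sum_card_fiberwise fun p _ => mem_univ p.1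

theorem card_bundle_eq_of_sum_le [Fintype A] {pref : A → List C} {qA : A → ℕ} {qC : C → ℕ}
    {coreq : C → C → Prop} {M : Finset (A × C)} (hM : IsMatchingCR pref qA qC coreq M)
    (hsum : ∑ a, qA a ≤ M.card) (a : A) : (bundle M a).card = qA a := by
  have hle : ∀ a ∈ univ, (bundle M a).card ≤ qA a := fun a _ => (hM.1 a).2.1
  refine (sum_eq_sum_iff_of_le hle).1 ?_ a (mem_univ a)
  exact le_antisymm (sum_le_sum hle) (card_eq_sum_card_bundle M ▸ hsum)

end Matching

section Lex

variable {C : Type*} [DecidableEq C] {l : List C} {S T : Finset C}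

theorem not_lexPrefers_of_subset (h : S ⊆ T) : ¬ lexPrefers l S T := by
  rintro ⟨c, hc, -⟩
  exact (mem_sdiff.1 hc).2 (h (mem_sdiff.1 hc).1)

theorem lexPrefers_or_lexPrefers_of_ne (h : S ≠ T) : lexPrefers l S T ∨ lexPrefers l T S := by
  have hne : ((S \ T) ∪ (T \ S)).Nonempty := by
    rw [nonempty_iff_ne_empty]
    intro he
    rw [union_eq_empty, sdiff_eq_empty_iff_subset, sdiff_eq_empty_iff_subset] at he
    exact h (Subset.antisymm he.1 he.2)
  obtain ⟨c, hc, hmin⟩ := exists_min_image _ l.idxOf hne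
  rcases mem_union.1 hc with hc | hc
  · exact Or.inl ⟨c, hc, hmin⟩
  · exact Or.inr ⟨c, hc, by rwa [union_comm]⟩

theorem lexPrefers.asymm (hS : ∀ c ∈ S, c ∈ l) (h : lexPrefers l S T) : ¬ lexPrefers l T S := by
  rintro ⟨d, hd, hd_min⟩
  obtain ⟨c, hc, hc_min⟩ := h
  have hcd : l.idxOf c = l.idxOf d :=
    le_antisymm (hc_min d (mem_union_right _ hd)) (hd_min c (mem_union_right _ hc))
  rw [List.idxOf_inj (hS c (mem_sdiff.1 hc).1)] at hcd
  exact (mem_sdiff.1 hd).2 (hcd ▸ (mem_sdiff.1 hc).1)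

theorem lexPrefers_cons {c : C} {tl : List C} (hS : c ∈ S) (hT : c ∉ T) :
    lexPrefers (c :: tl) S T :=
  ⟨c, mem_sdiff.2 ⟨hS, hT⟩, fun d _ => by simp⟩

theorem not_lexPrefers_cons {c : C} {tl : List C} (hT : c ∈ T) (hS : c ∉ S) :
    ¬ lexPrefers (c :: tl) S T := by
  rintro ⟨d, hd, hd_min⟩
  have h0 := hd_min c (mem_union_right _ (mem_sdiff.2 ⟨hT, hS⟩))
  rw [List.idxOf_cons_self, Nat.le_zero, List.idxOf_eq_zero_iff_eq_nil_or_head_eq] at h0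
  simp only [reduceCtorEq, List.head?_cons, Option.some.injEq, false_or] at h0
  exact hS (h0 ▸ (mem_sdiff.1 hd).1)

theorem lexPrefers_singleton_of_lt {c : C} (h : ∀ d ∈ T, l.idxOf c < l.idxOf d) :
    lexPrefers l {c} T := by
  have hc : c ∉ T := fun hc => lt_irrefl _ (h c hc)
  refine ⟨c, by simp [hc], fun d hd => ?_⟩
  rcases mem_union.1 hd with hd | hd
  · rw [(mem_singleton.1 (mem_sdiff.1 hd).1)]
  · exact (h d (mem_sdiff.1 hd).1).le

theorem lexPrefers_singleton_append {l₁ l₂ : List C} {c : C} (hc : c ∈ l₁)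
    (hT : ∀ d ∈ T, d ∉ l₁) : lexPrefers (l₁ ++ l₂) {c} T :=
  lexPrefers_singleton_of_lt fun d hd => by
    rw [List.idxOf_append_of_mem hc, List.idxOf_append_of_notMem (hT d hd)]
    exact (List.idxOf_lt_length_iff.2 hc).trans_le (Nat.le_add_right _ _)

theorem idxOf_ofFn_apply {k : ℕ} {e : Fin k → C} (he : Function.Injective e) (i : Fin k) :
    (List.ofFn e).idxOf (e i) = i := by
  simpa using (List.nodup_ofFn.2 he).idxOf_getElem i (by simp)

end Lex

section ParetoOptimality

variable {A C : Type*} [DecidableEq A] [DecidableEq C] {pref : A → List C} {qA : A → ℕ}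
  {coreq : C → C → Prop} {M : Finset (A × C)}

/-- Serial dictatorship: by strong induction on the rank, a dominating matching would leave every
applicant its bundle. -/
theorem paretoOptimalCR_of_rank (hM : IsMatchingCR pref qA (fun _ => 1) coreq M) (rank : A → ℕ)
    (hbest : ∀ a T, IsFeasibleCR pref qA coreq a T →
      (∀ c ∈ T, ∀ a', (a', c) ∈ M → rank a ≤ rank a') → ¬ lexPrefers (pref a) T (bundle M a)) :
    ParetoOptimalCR pref qA (fun _ => 1) coreq M := by
  refine ⟨hM, fun M' hM' ⟨⟨a₀, ha₀⟩, hnw⟩ => ?_⟩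
  have heq : ∀ k a, rank a = k → bundle M' a = bundle M a := by
    intro k
    induction k using Nat.strong_induction_on with
    | _ k ih =>
      rintro a rfl
      by_contra hne
      refine (lexPrefers_or_lexPrefers_of_ne hne).elim
        (hbest a _ (hM'.1 a) fun c hc a' hc' => ?_) (hnw a)
      by_contra hlt
      have hc'' : (a', c) ∈ M' := mem_bundle.1 (ih _ (not_le.1 hlt) a' rfl ▸ mem_bundle.2 hc')
      exact hlt (slots_le_one_iff.1 (hM'.2 c) _ _ (mem_bundle.1 hc) hc'' ▸ le_rfl)
  exact not_lexPrefers_of_subset (heq _ a₀ rfl).le ha₀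

theorem ParetoOptimalCR.not_lexPrefers_of_free (hPO : ParetoOptimalCR pref qA (fun _ => 1) coreq M)
    {a₀ : A} {T : Finset C} (hT : IsFeasibleCR pref qA coreq a₀ T)
    (hfree : ∀ c ∈ T, ∀ a, (a, c) ∉ M) : ¬ lexPrefers (pref a₀) T (bundle M a₀) := by
  intro hbetter
  set M' := M.filter (fun p => p.1 ≠ a₀) ∪ T.image (a₀, ·)
  have hmem : ∀ a c, (a, c) ∈ M' ↔ (a, c) ∈ M ∧ a ≠ a₀ ∨ a = a₀ ∧ c ∈ T := by
    intro a c
    simp only [M', mem_union, mem_filter, mem_image, Prod.mk.injEq]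
    constructor
    · rintro (h | ⟨c, hc, rfl, rfl⟩)
      exacts [Or.inl h, Or.inr ⟨rfl, hc⟩]
    · rintro (h | ⟨rfl, hc⟩)
      exacts [Or.inl h, Or.inr ⟨c, hc, rfl, rfl⟩]
  have hbundle : ∀ a, bundle M' a = if a = a₀ then T else bundle M a := by
    intro a
    ext c
    split_ifs with h <;> simp [mem_bundle, hmem, h]
  refine hPO.2 M' ⟨fun a => ?_, fun c => ?_⟩ ⟨⟨a₀, ?_⟩, fun a => ?_⟩
  · rw [hbundle]
    split_ifs with h
    exacts [h ▸ hT, hPO.1.1 a]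
  · refine slots_le_one_iff.2 fun a a' ha ha' => ?_
    rcases (hmem a c).1 ha with ⟨hM, -⟩ | ⟨rfl, hc⟩ <;>
      rcases (hmem a' c).1 ha' with ⟨hM', -⟩ | ⟨rfl, hc'⟩
    · exact slots_le_one_iff.1 (hPO.1.2 c) _ _ hM hM'
    · exact (hfree c hc' a hM).elim
    · exact (hfree c hc a' hM').elim
    · rfl
  · rwa [hbundle, if_pos rfl]
  · rw [hbundle]
    split_ifs with h
    · exact h ▸ hbetter.asymm hT.1
    · exact not_lexPrefers_of_subset subset_rfl

end ParetoOptimality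

namespace CACRGap

variable {m n D : ℕ}

abbrev appA (j : Fin m) : ApplZ m n := Sum.inl (Sum.inl j)
abbrev appG (i : Fin n) (p : Bool) : ApplZ m n := Sum.inl (Sum.inr (i, p))
abbrev appH : ApplZ m n := Sum.inr false
abbrev appB : ApplZ m n := Sum.inr true
abbrev yc (i : Fin n) (r : Fin 2) : CourseZ n D := Sum.inr (Sum.inl (i, r))
abbrev zc (z : Fin D) : CourseZ n D := Sum.inr (Sum.inr z)

def occurrence (lit : Fin m → Fin 3 → Fin n × Bool) (occ : Fin m → Fin 3 → Fin 2)
    (p : Fin m × Fin 3) : XCourse n :=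
  ((lit p.1 p.2).1, (lit p.1 p.2).2, occ p.1 p.2)

section Preferences

variable {lit : Fin m → Fin 3 → Fin n × Bool} {occ : Fin m → Fin 3 → Fin 2}
  {lX lX' : List (XCourse n)} {lZ : List (Fin D)}

theorem mem_prefZ_appA {j : Fin m} {c : CourseZ n D} :
    c ∈ prefZ lit occ lX lX' lZ (appA j) ↔ ∃ s, c = xcZ lit occ j s := by
  simp [prefZ, Fin.exists_fin_succ]

theorem mem_prefZ_appG {i : Fin n} {p : Bool} {c : CourseZ n D} :
    c ∈ prefZ lit occ lX lX' lZ (appG i p) ↔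
      c = yc i 0 ∨ c = yc i 1 ∨ c = Sum.inl (i, p, 0) ∨ c = Sum.inl (i, p, 1) := by
  simp [prefZ]

theorem eq_appB_of_zc_mem_prefZ {a : ApplZ m n} {z : Fin D}
    (h : zc z ∈ prefZ lit occ lX lX' lZ a) : a = appB := by
  rcases a with (j | ⟨i, p⟩) | (_ | _) <;> simp [prefZ, xcZ] at h ⊢

theorem prefZ_appA_eq_ofFn (j : Fin m) :
    prefZ lit occ lX lX' lZ (appA j) = List.ofFn (xcZ lit occ j) := by
  simp [prefZ, List.ofFn_succ]

theorem isFeasibleCR_yc_pair (i : Fin n) (p : Bool) :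
    IsFeasibleCR (prefZ lit occ lX lX' lZ) (qAZ m n D) coreqZ (appG i p) {yc i 0, yc i 1} := by
  refine ⟨by simp [prefZ], card_le_two.trans (by simp [qAZ]), fun c hc c' hcc' => ?_⟩
  rcases c' with _ | ⟨i', r'⟩ | _ <;> rcases mem_insert.1 hc with rfl | hc <;>
    simp_all [coreqZ, classOf] <;> fin_cases r' <;> simp

end Preferences

section Satisfiable

variable (lit : Fin m → Fin 3 → Fin n × Bool) (occ : Fin m → Fin 3 → Fin 2) (f : Fin n → Bool)

def firstTrue (j : Fin m) : Fin 3 :=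
  if h : (univ.filter fun s => (lit j s).2 = f (lit j s).1).Nonempty then min' _ h else 0

/-- The order of the serial dictatorship that produces `satMatching` below. -/
def rank : ApplZ m n → ℕ
  | Sum.inl (Sum.inr (i, p)) => if p = f i then 0 else 1
  | Sum.inl (Sum.inl _) => 2
  | Sum.inr false => 3
  | Sum.inr true => 4

theorem eq_appB_of_four_le_rank {a : ApplZ m n} (h : 4 ≤ rank f a) : a = appB := by
  rcases a with (j | ⟨i, p⟩) | (_ | _) <;> simp only [rank] at h
  · omega
  · split_ifs at h <;> omega
  · omega
  · rfl

theorem eq_appH_of_three_le_rank {a : ApplZ m n} (h : 3 ≤ rank f a) (hb : a ≠ appB) :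
    a = appH := by
  rcases a with (j | ⟨i, p⟩) | (_ | _) <;> simp only [rank] at h
  · omega
  · split_ifs at h <;> omega
  · rfl
  · exact (hb rfl).elim

variable {lit f}

theorem firstTrue_spec {j : Fin m} (hj : ∃ s, (lit j s).2 = f (lit j s).1) :
    (lit j (firstTrue lit f j)).2 = f (lit j (firstTrue lit f j)).1 := by
  obtain ⟨s, hs⟩ := hj
  have hne : (univ.filter fun s => (lit j s).2 = f (lit j s).1).Nonempty := ⟨s, by simpa⟩
  rw [firstTrue, dif_pos hne]
  exact (mem_filter.1 (min'_mem _ hne)).2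

theorem firstTrue_le {j : Fin m} {s : Fin 3} (hs : (lit j s).2 = f (lit j s).1) :
    firstTrue lit f j ≤ s := by
  have hne : (univ.filter fun s => (lit j s).2 = f (lit j s).1).Nonempty := ⟨s, by simpa⟩
  rw [firstTrue, dif_pos hne]
  exact min'_le _ s (by simpa)

variable (lit f)

/-- The holder of the `X`-course of occurrence `(j, s)` in the matching of part (a). -/
def ownerOcc (j : Fin m) (s : Fin 3) : ApplZ m n :=
  if (lit j s).2 ≠ f (lit j s).1 then appG (lit j s).1 (lit j s).2
  else if s = firstTrue lit f j then appA j else appH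

variable {lit occ}

theorem xcZ_injective (hbij : Function.Bijective (occurrence lit occ)) {j j' : Fin m}
    {s s' : Fin 3} (h : (xcZ lit occ j s : CourseZ n D) = xcZ lit occ j' s') : j = j' ∧ s = s' :=
  Prod.ext_iff.1 (hbij.1 (a₁ := (j, s)) (a₂ := (j', s')) (Sum.inl.inj h))

variable (hbij : Function.Bijective (occurrence lit occ))

noncomputable def owner : CourseZ n D → ApplZ m n
  | Sum.inl x => ownerOcc lit f ((Equiv.ofBijective _ hbij).symm x).1
      ((Equiv.ofBijective _ hbij).symm x).2
  | Sum.inr (Sum.inl (i, _)) => appG i (f i)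
  | Sum.inr (Sum.inr _) => appB

theorem owner_occurrence (j : Fin m) (s : Fin 3) :
    owner f hbij (Sum.inl (occurrence lit occ (j, s)) : CourseZ n D) = ownerOcc lit f j s := by
  simp only [owner, Equiv.ofBijective_symm_apply_apply]

theorem owner_xcZ (j : Fin m) (s : Fin 3) :
    owner f hbij (xcZ lit occ j s : CourseZ n D) = ownerOcc lit f j s :=
  owner_occurrence f hbij j s

theorem eq_xcZ_of_owner_eq_appA {j : Fin m} {c : CourseZ n D} (h : owner f hbij c = appA j) :
    c = xcZ lit occ j (firstTrue lit f j) := by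
  rcases c with x | ⟨i, r⟩ | z
  · obtain ⟨⟨j', s⟩, rfl⟩ := hbij.2 x
    rw [owner_occurrence, ownerOcc] at h
    split_ifs at h with h₁ h₂ <;> simp only [reduceCtorEq, Sum.inl.injEq] at h
    rw [h₂, h]
    rfl
  all_goals simp [owner] at h

theorem eq_of_owner_eq_appG {i : Fin n} {p : Bool} {c : CourseZ n D}
    (h : owner f hbij c = appG i p) :
    ∃ r, c = if p = f i then yc i r else Sum.inl (i, p, r) := by
  rcases c with x | ⟨i', r⟩ | z
  · obtain ⟨⟨j, s⟩, rfl⟩ := hbij.2 x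
    rw [owner_occurrence, ownerOcc] at h
    split_ifs at h with h₁ h₂ <;> simp only [reduceCtorEq, Sum.inl.injEq, Sum.inr.injEq,
      Prod.mk.injEq] at h
    obtain ⟨rfl, rfl⟩ := h
    exact ⟨occ j s, by simp [h₁, occurrence]⟩
  · simp only [owner, Sum.inl.injEq, Sum.inr.injEq, Prod.mk.injEq] at h
    obtain ⟨rfl, rfl⟩ := h
    exact ⟨r, by simp⟩
  · simp [owner] at h

theorem eq_xcZ_of_owner_eq_appH {c : CourseZ n D} (h : owner f hbij c = appH) :
    ∃ j s, c = xcZ lit occ j s ∧ (lit j s).2 = f (lit j s).1 ∧ s ≠ firstTrue lit f j := by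
  rcases c with x | ⟨i, r⟩ | z
  · obtain ⟨⟨j, s⟩, rfl⟩ := hbij.2 x
    rw [owner_occurrence, ownerOcc] at h
    split_ifs at h with h₁ h₂
    exact ⟨j, s, rfl, not_not.1 h₁, h₂⟩
  all_goals simp [owner] at h

theorem eq_zc_of_owner_eq_appB {c : CourseZ n D} (h : owner f hbij c = appB) : ∃ z, c = zc z := by
  rcases c with x | ⟨i, r⟩ | z
  · obtain ⟨⟨j, s⟩, rfl⟩ := hbij.2 x
    rw [owner_occurrence, ownerOcc] at h
    split_ifs at h
    simp at h
  · simp [owner] at h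
  · exact ⟨z, rfl⟩

noncomputable def satMatching : Finset (ApplZ m n × CourseZ n D) :=
  univ.map ⟨fun c => (owner f hbij c, c), fun _ _ h => (Prod.ext_iff.1 h).2⟩

variable {f hbij}

theorem mem_satMatching {a : ApplZ m n} {c : CourseZ n D} :
    (a, c) ∈ satMatching f hbij ↔ owner f hbij c = a := by
  simp only [satMatching, mem_map, mem_univ, true_and]
  exact ⟨fun ⟨_, h⟩ => (Prod.mk.inj h).2 ▸ (Prod.mk.inj h).1, fun h => ⟨c, h ▸ rfl⟩⟩

theorem mem_bundle_satMatching {a : ApplZ m n} {c : CourseZ n D} :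
    c ∈ bundle (satMatching f hbij) a ↔ owner f hbij c = a :=
  mem_bundle.trans mem_satMatching

variable (f hbij)

theorem card_satMatching :
    (satMatching f hbij : Finset (ApplZ m n × CourseZ n D)).card = D + 6 * n := by
  rw [satMatching, card_map, card_univ]
  simp only [Fintype.card_sum, Fintype.card_prod, Fintype.card_fin, Fintype.card_bool]
  ring

theorem card_bundle_satMatching_appH_le (hf : ∀ j, ∃ s, (lit j s).2 = f (lit j s).1) :
    (bundle (satMatching f hbij) appH : Finset (CourseZ n D)).card ≤ 2 * n - m := by
  set trueX : Finset (CourseZ n D) :=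
    univ.image fun ir : Fin n × Fin 2 => Sum.inl (ir.1, f ir.1, ir.2)
  set firstX : Finset (CourseZ n D) := univ.image fun j => xcZ lit occ j (firstTrue lit f j)
  have hfirstX : firstX.card = m := by
    rw [card_image_of_injective _ fun j j' h => (xcZ_injective hbij h).1, card_univ,
      Fintype.card_fin]
  have htrueX : trueX.card ≤ 2 * n := card_image_le.trans (by simp [mul_comm])
  have hsub : firstX ⊆ trueX := by
    intro c hc
    obtain ⟨j, -, rfl⟩ := mem_image.1 hc
    exact mem_image.2 ⟨((lit j (firstTrue lit f j)).1, occ j (firstTrue lit f j)), mem_univ _,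
      by simp [xcZ, firstTrue_spec (hf j)]⟩
  have hbundle : bundle (satMatching f hbij) appH ⊆ trueX \ firstX := by
    intro c hc
    obtain ⟨j, s, rfl, hs, hne⟩ := eq_xcZ_of_owner_eq_appH f hbij (mem_bundle_satMatching.1 hc)
    refine mem_sdiff.2 ⟨mem_image.2 ⟨((lit j s).1, occ j s), mem_univ _, by simp [xcZ, hs]⟩, ?_⟩
    intro hmem
    obtain ⟨j', -, h⟩ := mem_image.1 hmem
    obtain ⟨rfl, hs'⟩ := xcZ_injective hbij h
    exact hne hs'.symm
  calc (bundle (satMatching f hbij) appH).card ≤ (trueX \ firstX).card := card_le_card hbundle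
    _ = trueX.card - firstX.card := card_sdiff_of_subset hsub
    _ ≤ 2 * n - m := by omega

theorem card_bundle_satMatching_le (hf : ∀ j, ∃ s, (lit j s).2 = f (lit j s).1) (a : ApplZ m n) :
    (bundle (satMatching f hbij) a : Finset (CourseZ n D)).card ≤ qAZ m n D a := by
  rcases a with (j | ⟨i, p⟩) | (_ | _)
  · exact card_le_one.2 fun c hc c' hc' =>
      (eq_xcZ_of_owner_eq_appA f hbij (mem_bundle_satMatching.1 hc)).trans
        (eq_xcZ_of_owner_eq_appA f hbij (mem_bundle_satMatching.1 hc')).symm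
  · have hsub : bundle (satMatching f hbij) (appG i p) ⊆ univ.image fun r : Fin 2 =>
        (if p = f i then yc i r else Sum.inl (i, p, r) : CourseZ n D) := by
      intro c hc
      obtain ⟨r, rfl⟩ := eq_of_owner_eq_appG f hbij (mem_bundle_satMatching.1 hc)
      exact mem_image_of_mem _ (mem_univ r)
    exact (card_le_card hsub).trans (card_image_le.trans (by simp [qAZ]))
  · exact card_bundle_satMatching_appH_le f hbij hf
  · have hsub : bundle (satMatching f hbij) appB ⊆ univ.image (zc (n := n) (D := D)) := by
      intro c hc
      obtain ⟨z, rfl⟩ := eq_zc_of_owner_eq_appB f hbij (mem_bundle_satMatching.1 hc)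
      exact mem_image_of_mem _ (mem_univ z)
    exact (card_le_card hsub).trans (card_image_le.trans (by simp [qAZ]))

theorem owner_mem_prefZ {lX lX' : List (XCourse n)} {lZ : List (Fin D)}
    (hlXall : ∀ x, x ∈ lX) (hlZall : ∀ z, z ∈ lZ) (c : CourseZ n D) :
    c ∈ prefZ lit occ lX lX' lZ (owner f hbij c) := by
  rcases c with x | ⟨i, r⟩ | z
  · obtain ⟨⟨j, s⟩, rfl⟩ := hbij.2 x
    rw [owner_occurrence, ownerOcc]
    split_ifs with h₁ h₂
    · simp only [prefZ, occurrence]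
      generalize occ j s = r
      fin_cases r <;> simp
    · exact mem_prefZ_appA.2 ⟨s, rfl⟩
    · simp [prefZ, hlXall]
  · simp only [owner, prefZ]
    fin_cases r <;> simp
  · simp [owner, prefZ, hlZall]

theorem owner_eq_of_coreqZ {c c' : CourseZ n D} (h : coreqZ c c') :
    owner f hbij c' = owner f hbij c := by
  rcases c with x | ⟨i, r⟩ | z <;> rcases c' with x' | ⟨i', r'⟩ | z' <;>
    simp [coreqZ, classOf] at h
  · rw [h]
  · simp [owner, h]
  · rfl

theorem isMatchingCR_satMatching {lX lX' : List (XCourse n)} {lZ : List (Fin D)}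
    (hf : ∀ j, ∃ s, (lit j s).2 = f (lit j s).1) (hlXall : ∀ x, x ∈ lX) (hlZall : ∀ z, z ∈ lZ) :
    IsMatchingCR (prefZ lit occ lX lX' lZ) (qAZ m n D) (fun _ => 1) coreqZ
      (satMatching f hbij) := by
  refine ⟨fun a => ⟨fun c hc => ?_, card_bundle_satMatching_le f hbij hf a, fun c hc c' hcc' => ?_⟩,
    fun c => slots_le_one_iff.2 fun a a' ha ha' => ?_⟩
  · exact mem_bundle_satMatching.1 hc ▸ owner_mem_prefZ f hbij hlXall hlZall c
  · exact mem_bundle_satMatching.2 ((owner_eq_of_coreqZ f hbij hcc').trans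
      (mem_bundle_satMatching.1 hc))
  · exact (mem_satMatching.1 ha).symm.trans (mem_satMatching.1 ha')

variable {f hbij}

theorem owner_inl_ne_appB (x : XCourse n) : owner f hbij (Sum.inl x : CourseZ n D) ≠ appB := by
  obtain ⟨⟨j, s⟩, rfl⟩ := hbij.2 x
  rw [owner_occurrence, ownerOcc]
  split_ifs <;> simp

theorem owner_inl_of_ne {i : Fin n} {p : Bool} (hp : p ≠ f i) (r : Fin 2) :
    owner f hbij (Sum.inl (i, p, r) : CourseZ n D) = appG i p := by
  obtain ⟨⟨j, s⟩, h⟩ := hbij.2 (i, p, r)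
  rw [← h, owner_occurrence, ownerOcc]
  simp only [occurrence, Prod.mk.injEq] at h
  obtain ⟨hi, hp', -⟩ := h
  rw [if_pos (by rwa [hi, hp']), hi, hp']

variable {lX lX' : List (XCourse n)} {lZ : List (Fin D)}

theorem not_lexPrefers_of_owner_eq {l : List (CourseZ n D)} {a : ApplZ m n}
    {T : Finset (CourseZ n D)} (h : ∀ c ∈ T, owner f hbij c = a) :
    ¬ lexPrefers l T (bundle (satMatching f hbij) a) :=
  not_lexPrefers_of_subset fun c hc => mem_bundle_satMatching.2 (h c hc)

theorem not_lexPrefers_satMatching_appG_self {i : Fin n} {T : Finset (CourseZ n D)}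
    (hT : IsFeasibleCR (prefZ lit occ lX lX' lZ) (qAZ m n D) coreqZ (appG i (f i)) T) :
    ¬ lexPrefers (prefZ lit occ lX lX' lZ (appG i (f i))) T
      (bundle (satMatching f hbij) (appG i (f i))) := by
  by_cases hy : yc i 0 ∈ T
  · have hpair : {yc i 0, yc i 1} ⊆ T := by
      simpa [insert_subset_iff] using ⟨hy, hT.2.2 _ hy _ rfl⟩
    have hT_eq : {yc i 0, yc i 1} = T :=
      eq_of_subset_of_card_le hpair (hT.2.1.trans (by simp [qAZ]))
    refine not_lexPrefers_of_owner_eq fun c hc => ?_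
    rw [← hT_eq, mem_insert, mem_singleton] at hc
    rcases hc with rfl | rfl <;> rfl
  · exact not_lexPrefers_cons (mem_bundle_satMatching.2 rfl) hy

theorem not_lexPrefers_satMatching_appA (hf : ∀ j, ∃ s, (lit j s).2 = f (lit j s).1) {j : Fin m}
    {T : Finset (CourseZ n D)}
    (hT : IsFeasibleCR (prefZ lit occ lX lX' lZ) (qAZ m n D) coreqZ (appA j) T)
    (hrank : ∀ c ∈ T, 2 ≤ rank f (owner f hbij c)) :
    ¬ lexPrefers (prefZ lit occ lX lX' lZ (appA j)) T (bundle (satMatching f hbij) (appA j)) := by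
  rintro ⟨c, hc, hmin⟩
  obtain ⟨hcT, hcB⟩ := mem_sdiff.1 hc
  obtain ⟨s, rfl⟩ := mem_prefZ_appA.1 (hT.1 _ hcT)
  have hs : (lit j s).2 = f (lit j s).1 := by
    by_contra hs
    have h := hrank _ hcT
    rw [owner_xcZ, ownerOcc, if_pos hs, rank, if_neg hs] at h
    omega
  have hdB : (xcZ lit occ j (firstTrue lit f j) : CourseZ n D) ∈
      bundle (satMatching f hbij) (appA j) := by
    rw [mem_bundle_satMatching, owner_xcZ, ownerOcc,
      if_neg (not_not.2 (firstTrue_spec (hf j))), if_pos rfl]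
  have hne : s ≠ firstTrue lit f j := fun h => hcB (h ▸ hdB)
  have hdT : xcZ lit occ j (firstTrue lit f j) ∉ T := fun hdT =>
    hne (xcZ_injective hbij (card_le_one.1 hT.2.1 _ hcT _ hdT)).2
  have hidx := hmin _ (mem_union_right _ (mem_sdiff.2 ⟨hdB, hdT⟩))
  have he : Function.Injective (xcZ lit occ j : Fin 3 → CourseZ n D) :=
    fun s s' h => (xcZ_injective hbij h).2
  rw [prefZ_appA_eq_ofFn, idxOf_ofFn_apply he, idxOf_ofFn_apply he] at hidx
  exact hne (le_antisymm (Fin.le_def.2 hidx) (firstTrue_le hs))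

theorem not_lexPrefers_satMatching (hf : ∀ j, ∃ s, (lit j s).2 = f (lit j s).1) {a : ApplZ m n}
    {T : Finset (CourseZ n D)}
    (hT : IsFeasibleCR (prefZ lit occ lX lX' lZ) (qAZ m n D) coreqZ a T)
    (hrank : ∀ c ∈ T, rank f a ≤ rank f (owner f hbij c)) :
    ¬ lexPrefers (prefZ lit occ lX lX' lZ a) T (bundle (satMatching f hbij) a) := by
  rcases a with (j | ⟨i, p⟩) | (_ | _)
  · exact not_lexPrefers_satMatching_appA hf hT hrank
  · by_cases hp : p = f i
    · subst hp
      exact not_lexPrefers_satMatching_appG_self hT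
    refine not_lexPrefers_of_owner_eq fun c hc => ?_
    have hc_rank := hrank c hc
    rcases mem_prefZ_appG.1 (hT.1 c hc) with rfl | rfl | rfl | rfl
    · simp [rank, owner, hp] at hc_rank
    · simp [rank, owner, hp] at hc_rank
    · exact owner_inl_of_ne hp 0
    · exact owner_inl_of_ne hp 1
  · refine not_lexPrefers_of_owner_eq fun c hc => ?_
    obtain ⟨x, -, rfl⟩ := List.mem_map.1 (hT.1 c hc)
    exact eq_appH_of_three_le_rank f (hrank _ hc) (owner_inl_ne_appB x)
  · exact not_lexPrefers_of_owner_eq fun c hc => eq_appB_of_four_le_rank f (hrank c hc)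

variable (f hbij)

theorem paretoOptimalCR_satMatching (hf : ∀ j, ∃ s, (lit j s).2 = f (lit j s).1)
    (hlXall : ∀ x, x ∈ lX) (hlZall : ∀ z, z ∈ lZ) :
    ParetoOptimalCR (prefZ lit occ lX lX' lZ) (qAZ m n D) (fun _ => 1) coreqZ
      (satMatching f hbij) :=
  paretoOptimalCR_of_rank (isMatchingCR_satMatching f hbij hf hlXall hlZall) (rank f)
    fun _ _ hT hrank => not_lexPrefers_satMatching hf hT fun c hc =>
      hrank c hc _ (mem_satMatching.2 rfl)

end Satisfiable

section Unsatisfiable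

variable {lit : Fin m → Fin 3 → Fin n × Bool} {occ : Fin m → Fin 3 → Fin 2}
  {lX lX' : List (XCourse n)} {lZ : List (Fin D)} {M : Finset (ApplZ m n × CourseZ n D)}

theorem exists_mem_zc_of_card_gt (hslots : ∀ c, slots M c ≤ 1) (hcard : 6 * n < M.card) :
    ∃ a z, (a, zc z) ∈ M := by
  by_contra hz
  simp only [not_exists] at hz
  have hZ : ∑ z : Fin D, slots M (Sum.inr (Sum.inr z)) = 0 :=
    sum_eq_zero fun z _ => Nat.lt_one_iff.1 (not_le.1 fun h =>
      hz _ z (one_le_slots_iff.1 h).choose_spec)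
  have hX : ∑ x : XCourse n, slots M (Sum.inl x) ≤ 4 * n :=
    (sum_le_sum fun x _ => hslots _).trans_eq (by simp; ring)
  have hY : ∑ y : Fin n × Fin 2, slots M (Sum.inr (Sum.inl y)) ≤ 2 * n :=
    (sum_le_sum fun y _ => hslots _).trans_eq (by simp; ring)
  rw [card_eq_sum_slots, Fintype.sum_sum_type, Fintype.sum_sum_type] at hcard
  omega

theorem bundle_appB_eq_of_mem
    (hM : IsMatchingCR (prefZ lit occ lX lX' lZ) (qAZ m n D) (fun _ => 1) coreqZ M)
    {a : ApplZ m n} {z : Fin D} (h : (a, zc z) ∈ M) : bundle M appB = univ.image zc := by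
  obtain rfl : a = appB := eq_appB_of_zc_mem_prefZ ((hM.1 a).1 _ (mem_bundle.2 h))
  have hsub : univ.image zc ⊆ bundle M appB :=
    image_subset_iff.2 fun z' _ => (hM.1 appB).2.2 _ (mem_bundle.2 h) _ rfl
  refine (eq_of_subset_of_card_le hsub ((hM.1 appB).2.1.trans_eq ?_)).symm
  rw [card_image_of_injective _ fun z z' h => by simpa using h]
  simp [qAZ]

theorem exists_mem_inl_of_bundle_appB
    (hPO : ParetoOptimalCR (prefZ lit occ lX lX' lZ) (qAZ m n D) (fun _ => 1) coreqZ M)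
    (hlX'all : ∀ x, x ∈ lX') (hD : 0 < D) (hb : bundle M appB = univ.image zc) (x : XCourse n) :
    ∃ a, (a, Sum.inl x) ∈ M := by
  by_contra hfree
  simp only [not_exists] at hfree
  have hx : (Sum.inl x : CourseZ n D) ∈ lX'.map Sum.inl := List.mem_map.2 ⟨x, hlX'all x, rfl⟩
  refine hPO.not_lexPrefers_of_free (a₀ := appB) (T := {Sum.inl x}) ⟨?_, ?_, ?_⟩ ?_ ?_
  · intro c hc
    rw [mem_singleton.1 hc]
    exact List.mem_append_left _ hx
  · simp only [card_singleton, qAZ]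
    exact hD
  · intro c hc c' hcc'
    rw [mem_singleton] at hc ⊢
    subst hc
    rcases c' with x' | _ | _ <;> simp_all [coreqZ, classOf]
  · simpa using hfree
  · rw [hb]
    exact lexPrefers_singleton_append hx fun d hd => by
      obtain ⟨z, -, rfl⟩ := mem_image.1 hd
      simp

theorem exists_mem_yc
    (hPO : ParetoOptimalCR (prefZ lit occ lX lX' lZ) (qAZ m n D) (fun _ => 1) coreqZ M)
    (i : Fin n) (r : Fin 2) : ∃ a, (a, yc i r) ∈ M := by
  by_contra hfree
  simp only [not_exists] at hfree
  have hfree' : ∀ c ∈ ({yc i 0, yc i 1} : Finset (CourseZ n D)), ∀ a, (a, c) ∉ M := by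
    intro c hc a hac
    refine hfree a (mem_bundle.1 ((hPO.1.1 a).2.2 _ (mem_bundle.2 hac) _ ?_))
    rcases mem_insert.1 hc with rfl | hc
    · rfl
    · rw [mem_singleton.1 hc]
      rfl
  exact hPO.not_lexPrefers_of_free (isFeasibleCR_yc_pair i true) hfree'
    (lexPrefers_cons (mem_insert_self _ _) fun h => hfree' _ (mem_insert_self _ _) _
      (mem_bundle.1 h))

theorem card_eq_of_bundle_appB
    (hPO : ParetoOptimalCR (prefZ lit occ lX lX' lZ) (qAZ m n D) (fun _ => 1) coreqZ M)
    (hlX'all : ∀ x, x ∈ lX') (hD : 0 < D) (hb : bundle M appB = univ.image zc) :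
    M.card = D + 6 * n := by
  have hslots : ∀ c, slots M c = 1 := by
    intro c
    refine le_antisymm (hPO.1.2 c) (one_le_slots_iff.2 ?_)
    rcases c with x | ⟨i, r⟩ | z
    · exact exists_mem_inl_of_bundle_appB hPO hlX'all hD hb x
    · exact exists_mem_yc hPO i r
    · exact ⟨appB, mem_bundle.1 (hb ▸ mem_image_of_mem _ (mem_univ z))⟩
  simp only [card_eq_sum_slots, hslots, sum_const, card_univ, smul_eq_mul, mul_one,
    Fintype.card_sum, Fintype.card_prod, Fintype.card_fin, Fintype.card_bool]
  ring

theorem sum_qAZ (hm : 3 * m = 4 * n) : ∑ a, qAZ m n D a = D + 6 * n := by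
  simp [qAZ, Fintype.sum_sum_type]
  omega

theorem yc_mem_of_card_eq_two {i : Fin n} {p : Bool} {r : Fin 2} {S : Finset (CourseZ n D)}
    (hS : IsFeasibleCR (prefZ lit occ lX lX' lZ) (qAZ m n D) coreqZ (appG i p) S)
    (hcard : S.card = 2) (hx : Sum.inl (i, p, r) ∉ S) : yc i 0 ∈ S := by
  by_contra hy
  have hy' : yc i 1 ∉ S := fun h => hy (hS.2.2 _ h _ rfl)
  have hsub : S ⊆ ({Sum.inl (i, p, 0), Sum.inl (i, p, 1)} : Finset (CourseZ n D)).erase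
      (Sum.inl (i, p, r)) := by
    intro c hc
    refine mem_erase.2 ⟨fun h => hx (h ▸ hc), ?_⟩
    rcases mem_prefZ_appG.1 (hS.1 c hc) with rfl | rfl | rfl | rfl <;> simp_all
  have h := card_le_card hsub
  rw [card_erase_of_mem (by fin_cases r <;> simp)] at h
  simp at h
  omega

theorem satisfiable_of_card_bundle_eq
    (hM : IsMatchingCR (prefZ lit occ lX lX' lZ) (qAZ m n D) (fun _ => 1) coreqZ M)
    (hfull : ∀ a, (bundle M a).card = qAZ m n D a) :
    ∃ f : Fin n → Bool, ∀ j, ∃ s, (lit j s).2 = f (lit j s).1 := by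
  refine ⟨fun i => decide (yc i 0 ∈ bundle M (appG i true)), fun j => ?_⟩
  obtain ⟨c, hc⟩ := card_eq_one.1 (hfull (appA j))
  have hcM : (appA j, c) ∈ M := mem_bundle.1 (hc ▸ mem_singleton_self c)
  obtain ⟨s, rfl⟩ := mem_prefZ_appA.1 ((hM.1 _).1 _ (mem_bundle.2 hcM))
  refine ⟨s, ?_⟩
  have hx : xcZ lit occ j s ∉ bundle M (appG (lit j s).1 (lit j s).2) := fun h =>
    by simpa using slots_le_one_iff.1 (hM.2 _) _ _ hcM (mem_bundle.1 h)
  have hy := yc_mem_of_card_eq_two (hM.1 _) (hfull _) hx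
  cases hp : (lit j s).2
  · rw [hp] at hy
    have hy' : yc (lit j s).1 0 ∉ bundle M (appG (lit j s).1 true) := fun h => by
      simpa using slots_le_one_iff.1 (hM.2 _) _ _ (mem_bundle.1 hy) (mem_bundle.1 h)
    simpa using hy'
  · rw [hp] at hy
    simpa using hy

theorem satisfiable_of_paretoOptimalCR (hm : 3 * m = 4 * n) (hlX'all : ∀ x, x ∈ lX')
    (hPO : ParetoOptimalCR (prefZ lit occ lX lX' lZ) (qAZ m n D) (fun _ => 1) coreqZ M)
    (hcard : 6 * n < M.card) : ∃ f : Fin n → Bool, ∀ j, ∃ s, (lit j s).2 = f (lit j s).1 := by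
  obtain ⟨a, z, hz⟩ := exists_mem_zc_of_card_gt hPO.1.2 hcard
  have hb := bundle_appB_eq_of_mem hPO.1 hz
  refine satisfiable_of_card_bundle_eq hPO.1 (card_bundle_eq_of_sum_le hPO.1 ?_)
  rw [sum_qAZ hm, card_eq_of_bundle_appB hPO hlX'all z.pos hb]

end Unsatisfiable

end CACRGap

theorem cacr_gap_reduction_general {m n α : ℕ}
    (lit : Fin m → Fin 3 → Fin n × Bool) (occ : Fin m → Fin 3 → Fin 2)
    (hbij : Function.Bijective
      (fun p : Fin m × Fin 3 =>
        (((lit p.1 p.2).1, (lit p.1 p.2).2, occ p.1 p.2) : Fin n × Bool × Fin 2)))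
    (lX lX' : List (XCourse n)) (lZ : List (Fin (6 * n * (α - 1) + 1)))
    (hlXall : ∀ x, x ∈ lX)
    (hlX'all : ∀ x, x ∈ lX')
    (hlZall : ∀ z, z ∈ lZ) :
    ((∃ f : Fin n → Bool, ∀ j : Fin m, ∃ s : Fin 3, (lit j s).2 = f (lit j s).1) →
      ∃ M : Finset (ApplZ m n × CourseZ n (6 * n * (α - 1) + 1)),
        ParetoOptimalCR (prefZ lit occ lX lX' lZ) (qAZ m n (6 * n * (α - 1) + 1))
          (fun _ => 1) coreqZ M ∧
        M.card = (6 * n * (α - 1) + 1) + 6 * n) ∧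
    ((¬ ∃ f : Fin n → Bool, ∀ j : Fin m, ∃ s : Fin 3, (lit j s).2 = f (lit j s).1) →
      ∀ M : Finset (ApplZ m n × CourseZ n (6 * n * (α - 1) + 1)),
        ParetoOptimalCR (prefZ lit occ lX lX' lZ) (qAZ m n (6 * n * (α - 1) + 1))
          (fun _ => 1) coreqZ M →
        M.card ≤ 6 * n) := by
  have hm : 3 * m = 4 * n := by
    have h := Fintype.card_of_bijective hbij
    simp only [Fintype.card_prod, Fintype.card_fin, Fintype.card_bool] at h
    omega
  refine ⟨fun ⟨f, hf⟩ => ⟨CACRGap.satMatching f hbij, ?_, CACRGap.card_satMatching f hbij⟩,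
    fun hunsat M hPO => not_lt.1 fun hcard => hunsat ?_⟩
  · exact CACRGap.paretoOptimalCR_satMatching f hbij hf hlXall hlZall
  · exact CACRGap.satisfiable_of_paretoOptimalCR hm hlX'all hPO hcard

/-- let `B` be a Boolean formula with clauses of size exactly three
in which every variable occurs exactly twice unnegated and twice negated (encoded
by `lit`, `occ` and the bijectivity hypothesis), let `α ≥ 1` and
`D = 6n(α−1) + 1`, and consider the constructed CACR instance (all courses of
capacity 1).  Then: (a) if `B` is satisfiable, the instance admits a Pareto
optimal matching of cardinality `D + 6n`; (b) if `B` is not satisfiable, every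
Pareto optimal matching has cardinality at most `6n`. -/
theorem cacr_gap_reduction {m n α : ℕ} (hα : 1 ≤ α)
    (lit : Fin m → Fin 3 → Fin n × Bool) (occ : Fin m → Fin 3 → Fin 2)
    (hbij : Function.Bijective
      (fun p : Fin m × Fin 3 =>
        (((lit p.1 p.2).1, (lit p.1 p.2).2, occ p.1 p.2) : Fin n × Bool × Fin 2)))
    (lX lX' : List (XCourse n)) (lZ : List (Fin (6 * n * (α - 1) + 1)))
    (hlX : lX.Nodup) (hlXall : ∀ x, x ∈ lX)
    (hlX' : lX'.Nodup) (hlX'all : ∀ x, x ∈ lX')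
    (hlZ : lZ.Nodup) (hlZall : ∀ z, z ∈ lZ) :
    ((∃ f : Fin n → Bool, ∀ j : Fin m, ∃ s : Fin 3, (lit j s).2 = f (lit j s).1) →
      ∃ M : Finset (ApplZ m n × CourseZ n (6 * n * (α - 1) + 1)),
        ParetoOptimalCR (prefZ lit occ lX lX' lZ) (qAZ m n (6 * n * (α - 1) + 1))
          (fun _ => 1) coreqZ M ∧
        M.card = (6 * n * (α - 1) + 1) + 6 * n) ∧
    ((¬ ∃ f : Fin n → Bool, ∀ j : Fin m, ∃ s : Fin 3, (lit j s).2 = f (lit j s).1) →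
      ∀ M : Finset (ApplZ m n × CourseZ n (6 * n * (α - 1) + 1)),
        ParetoOptimalCR (prefZ lit occ lX lX' lZ) (qAZ m n (6 * n * (α - 1) + 1))
          (fun _ => 1) coreqZ M →
        M.card ≤ 6 * n) :=
  cacr_gap_reduction_general lit occ hbij lX lX' lZ hlXall hlX'all hlZall
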